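/- arXiv:1311.2327 — 4 statements merged into one kernel-verified Lean document; each statement's English description precedes it below -/
import Mathlib

section
/- Let h : 𝔻̄ → 𝔻̄ be a finite Blaschke product of degree k+1, i.e. h(z) = λ ∏_{j=0}^{k} (z − α_j)/(ᾱ_j z − 1) with |λ| = 1 and |α_j| < 1 for all j. Then for every ζ on the unit circle, the preimage h^{−1}(ζ) ∩ ∂𝔻 consists of exactly k+1 distinct points of the unit circle. -/
open Finset Polynomial ComplexConjugate

/-!
Write `h = λ N / D` with `N = ∏ (X - αⱼ)` and `D = ∏ (ᾱⱼ X - 1)`. Since `D` has no zeros on the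
circle, the solutions of `h z = ζ` on the circle are the roots there of `P = λ N - ζ D`, whose
leading coefficient `λ - ζ ∏ ᾱⱼ` is nonzero because `|∏ αⱼ| < 1`; so `deg P = k + 1`.
The identity `|ā z - 1|² = |z - a|² + (1 - |z|²)(1 - |a|²)` shows that `|N| < |D|` inside the disc
and `|N| > |D|` outside, so every root of `P` lies on the circle. A multiple root `z` of `P` would
make the Wronskian `W(D, P) = λ W(D, N)` vanish at `z`; but on the circle
`W(D, N)(z) = (-z)ᵏ ∑ⱼ (|αⱼ|² - 1) ∏_{i ≠ j} |z - αᵢ|²`, a nonzero multiple of a negative number.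
Hence `P` has `k + 1` distinct roots, all on the circle.
-/

lemma Finset.prod_lt_prod_of_nonempty_of_nonneg {ι R : Type*} [CommMonoidWithZero R]
    [PartialOrder R] [ZeroLEOneClass R] [PosMulStrictMono R] [Nontrivial R]
    {s : Finset ι} {f g : ι → R} (hf : ∀ i ∈ s, 0 ≤ f i) (hfg : ∀ i ∈ s, f i < g i)
    (hs : s.Nonempty) : ∏ i ∈ s, f i < ∏ i ∈ s, g i := by
  by_cases hpos : ∀ i ∈ s, 0 < f i
  · exact prod_lt_prod_of_nonempty hpos hfg hs
  · simp only [not_forall] at hpos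
    obtain ⟨i, hi, hfi⟩ := hpos
    rw [prod_eq_zero hi ((hf i hi).eq_of_not_lt hfi).symm]
    exact prod_pos fun j hj => (hf j hj).trans_lt (hfg j hj)

namespace Complex

lemma normSq_conj_mul_sub_one (a z : ℂ) :
    normSq (conj a * z - 1) = normSq (z - a) + (1 - normSq z) * (1 - normSq a) := by
  apply ofReal_injective
  push_cast
  simp only [← mul_conj, map_mul, map_sub, map_one, conj_conj]
  ring

lemma norm_sub_lt_norm_conj_mul_sub_one {a z : ℂ} (ha : ‖a‖ < 1) (hz : ‖z‖ < 1) :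
    ‖z - a‖ < ‖conj a * z - 1‖ := by
  have key := normSq_conj_mul_sub_one a z
  simp only [normSq_eq_norm_sq] at key
  have : 0 < (1 - ‖z‖ ^ 2) * (1 - ‖a‖ ^ 2) := by
    apply mul_pos <;> nlinarith [norm_nonneg z, norm_nonneg a]
  exact lt_of_pow_lt_pow_left₀ 2 (norm_nonneg _) (by linarith)

lemma norm_conj_mul_sub_one_lt_norm_sub {a z : ℂ} (ha : ‖a‖ < 1) (hz : 1 < ‖z‖) :
    ‖conj a * z - 1‖ < ‖z - a‖ := by
  have key := normSq_conj_mul_sub_one a z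
  simp only [normSq_eq_norm_sq] at key
  have : (1 - ‖z‖ ^ 2) * (1 - ‖a‖ ^ 2) < 0 := by
    apply mul_neg_of_neg_of_pos <;> nlinarith [norm_nonneg z, norm_nonneg a]
  exact lt_of_pow_lt_pow_left₀ 2 (norm_nonneg _) (by linarith)

lemma conj_mul_sub_one_ne_zero {a z : ℂ} (ha : ‖a‖ < 1) (hz : ‖z‖ = 1) :
    conj a * z - 1 ≠ 0 := by
  rw [sub_ne_zero]
  intro h
  have := congrArg norm h
  rw [norm_mul, hz, mul_one, RCLike.norm_conj, norm_one] at this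
  exact ha.ne this

lemma conj_mul_sub_one_mul_sub {z : ℂ} (hz : ‖z‖ = 1) (a : ℂ) :
    (conj a * z - 1) * (z - a) = -z * (‖z - a‖ ^ 2 : ℝ) := by
  have hzz : z * conj z = 1 := by rw [mul_conj, normSq_eq_norm_sq, hz]; simp
  rw [← normSq_eq_norm_sq, ← mul_conj, map_sub]
  linear_combination (z - a) * hzz

end Complex

namespace Polynomial

variable {R : Type*} [CommRing R]

lemma wronskian_mul_mul (f F g G : R[X]) :
    wronskian (f * F) (g * G) = wronskian f g * (F * G) + f * g * wronskian F G := by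
  simp only [wronskian, derivative_mul]
  ring

lemma wronskian_prod_prod {ι : Type*} [DecidableEq ι] (s : Finset ι) (f g : ι → R[X]) :
    wronskian (∏ i ∈ s, f i) (∏ i ∈ s, g i) =
      ∑ i ∈ s, wronskian (f i) (g i) * ∏ j ∈ s.erase i, f j * g j := by
  induction s using Finset.induction with
  | empty => simp [wronskian]
  | insert i s hi ih =>
    rw [prod_insert hi, prod_insert hi, wronskian_mul_mul, ih, sum_insert hi, erase_insert hi,
      prod_mul_distrib, mul_sum]
    congr 1
    refine sum_congr rfl fun j hj => ?_
    rw [erase_insert_of_ne (ne_of_mem_of_not_mem hj hi).symm, prod_insert (by simp [hi])]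
    ring

lemma wronskian_C_mul_sub_C_mul (a b : R) (p q : R[X]) :
    wronskian q (C a * p - C b * q) = C a * wronskian q p := by
  simp only [wronskian, derivative_sub, derivative_C_mul]
  ring

lemma eval_wronskian_eq_zero_of_isRoot {p : R[X]} {z : R} (hp : p.IsRoot z)
    (hp' : (derivative p).IsRoot z) (q : R[X]) : (wronskian q p).eval z = 0 := by
  simp [wronskian, hp.eq_zero, hp'.eq_zero]

lemma nodup_roots_of_not_isRoot_derivative [IsDomain R] {p : R[X]} (hp : p ≠ 0)
    (h : ∀ z, p.IsRoot z → ¬(derivative p).IsRoot z) : p.roots.Nodup := by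
  classical
  rw [Multiset.nodup_iff_count_le_one]
  intro z
  rw [count_roots]
  by_contra! hz
  rw [one_lt_rootMultiplicity_iff_isRoot hp] at hz
  exact h z hz.1 hz.2

end Polynomial

section Blaschke

variable {ι : Type*} [Fintype ι] (α : ι → ℂ)

noncomputable def blaschkeNum : ℂ[X] := ∏ j, (X - C (α j))

noncomputable def blaschkeDen : ℂ[X] := ∏ j, (C (conj (α j)) * X - 1)

/-- `λ N - ζ D`: on the unit circle, its roots solve `λ ∏ⱼ (z - αⱼ) / (ᾱⱼ z - 1) = ζ`. -/
noncomputable def blaschkeLevel (lam ζ : ℂ) : ℂ[X] :=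
  C lam * blaschkeNum α - C ζ * blaschkeDen α

@[simp]
lemma eval_blaschkeNum (z : ℂ) : (blaschkeNum α).eval z = ∏ j, (z - α j) := by
  simp [blaschkeNum, eval_prod]

@[simp]
lemma eval_blaschkeDen (z : ℂ) : (blaschkeDen α).eval z = ∏ j, (conj (α j) * z - 1) := by
  simp [blaschkeDen, eval_prod]

lemma isRoot_blaschkeLevel_iff {lam ζ z : ℂ} :
    (blaschkeLevel α lam ζ).IsRoot z ↔ lam * ∏ j, (z - α j) = ζ * ∏ j, (conj (α j) * z - 1) := by
  simp [blaschkeLevel, sub_eq_zero]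

lemma natDegree_blaschkeNum : (blaschkeNum α).natDegree = Fintype.card ι := by
  simp [blaschkeNum, natDegree_prod_of_monic _ _ fun j _ => monic_X_sub_C (α j)]

lemma natDegree_blaschkeDen_factor_le (a : ℂ) : (C (conj a) * X - 1 : ℂ[X]).natDegree ≤ 1 := by
  compute_degree

lemma natDegree_blaschkeDen_le : (blaschkeDen α).natDegree ≤ Fintype.card ι :=
  (natDegree_prod_le _ _).trans <| by
    simpa using sum_le_sum fun j (_ : j ∈ univ) => natDegree_blaschkeDen_factor_le (α j)

lemma coeff_blaschkeDen_card : (blaschkeDen α).coeff (Fintype.card ι) = ∏ j, conj (α j) := by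
  have h := coeff_prod_of_natDegree_le (s := univ) _ 1
    fun j (_ : j ∈ univ) => natDegree_blaschkeDen_factor_le (α j)
  simp only [card_univ, mul_one] at h
  rw [blaschkeDen, h]
  simp [coeff_one]

variable {α}

lemma natDegree_blaschkeLevel [Nonempty ι] {lam ζ : ℂ} (hlam : ‖lam‖ = 1) (hζ : ‖ζ‖ = 1)
    (hα : ∀ j, ‖α j‖ < 1) : (blaschkeLevel α lam ζ).natDegree = Fintype.card ι := by
  refine natDegree_eq_of_le_of_coeff_ne_zero ?_ ?_
  · refine (natDegree_sub_le _ _).trans (max_le ?_ ?_)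
    · exact (natDegree_C_mul_le _ _).trans (natDegree_blaschkeNum α).le
    · exact (natDegree_C_mul_le _ _).trans (natDegree_blaschkeDen_le α)
  · have hNum : (blaschkeNum α).coeff (Fintype.card ι) = 1 := by
      rw [← natDegree_blaschkeNum α]
      exact (monic_prod_of_monic _ _ fun j _ => monic_X_sub_C (α j)).coeff_natDegree
    have hnorm : ‖ζ * ∏ j, conj (α j)‖ < ‖lam‖ := by
      simpa [norm_prod, hζ, hlam] using prod_lt_prod_of_nonempty_of_nonneg (g := fun _ => (1 : ℝ))
        (fun j _ => norm_nonneg (α j)) (fun j _ => hα j) univ_nonempty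
    rw [blaschkeLevel, coeff_sub, coeff_C_mul, coeff_C_mul, hNum, coeff_blaschkeDen_card, mul_one,
      sub_ne_zero]
    intro h
    rw [h] at hnorm
    exact hnorm.false

lemma norm_eq_one_of_isRoot_blaschkeLevel [Nonempty ι] {lam ζ z : ℂ} (hlam : ‖lam‖ = 1)
    (hζ : ‖ζ‖ = 1) (hα : ∀ j, ‖α j‖ < 1) (hz : (blaschkeLevel α lam ζ).IsRoot z) : ‖z‖ = 1 := by
  have hnorm : ∏ j, ‖z - α j‖ = ∏ j, ‖conj (α j) * z - 1‖ := by
    simpa [norm_prod, hlam, hζ] using congrArg norm ((isRoot_blaschkeLevel_iff α).mp hz)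
  rcases lt_trichotomy ‖z‖ 1 with hlt | heq | hgt
  · refine absurd hnorm (prod_lt_prod_of_nonempty_of_nonneg (fun j _ => norm_nonneg _)
      (fun j _ => Complex.norm_sub_lt_norm_conj_mul_sub_one (hα j) hlt) univ_nonempty).ne
  · exact heq
  · refine absurd hnorm.symm (prod_lt_prod_of_nonempty_of_nonneg (fun j _ => norm_nonneg _)
      (fun j _ => Complex.norm_conj_mul_sub_one_lt_norm_sub (hα j) hgt) univ_nonempty).ne

lemma wronskian_blaschke_factor (a : ℂ) :
    wronskian (C (conj a) * X - 1) (X - C a) = C ((‖a‖ ^ 2 : ℝ) - 1 : ℂ) := by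
  have ha : (‖a‖ ^ 2 : ℝ) = conj a * a := by push_cast; rw [mul_comm, Complex.mul_conj']
  simp only [wronskian, derivative_sub, derivative_C_mul, derivative_X, derivative_C,
    derivative_one, ha]
  simp only [C_sub, C_mul, C_1]
  ring

lemma eval_wronskian_blaschkeDen_blaschkeNum [DecidableEq ι] {z : ℂ} (hz : ‖z‖ = 1) :
    (wronskian (blaschkeDen α) (blaschkeNum α)).eval z = (-z) ^ (Fintype.card ι - 1) *
      ((∑ j, (‖α j‖ ^ 2 - 1) * ∏ i ∈ univ.erase j, ‖z - α i‖ ^ 2 : ℝ) : ℂ) := by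
  rw [blaschkeDen, blaschkeNum, wronskian_prod_prod, eval_finsetSum, Complex.ofReal_sum,
    mul_sum]
  refine sum_congr rfl fun j _ => ?_
  simp only [eval_mul, eval_prod, wronskian_blaschke_factor, eval_C, eval_sub, eval_X, eval_one]
  simp only [Complex.conj_mul_sub_one_mul_sub hz, prod_mul_distrib, prod_const,
    card_erase_of_mem (mem_univ j), card_univ]
  push_cast
  ring

lemma eval_wronskian_blaschkeDen_blaschkeNum_ne_zero [Nonempty ι] (hα : ∀ j, ‖α j‖ < 1) {z : ℂ}
    (hz : ‖z‖ = 1) : (wronskian (blaschkeDen α) (blaschkeNum α)).eval z ≠ 0 := by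
  classical
  have hz0 : z ≠ 0 := norm_ne_zero_iff.mp (by simp [hz])
  have hneg : ∑ j, (‖α j‖ ^ 2 - 1) * ∏ i ∈ univ.erase j, ‖z - α i‖ ^ 2 < 0 := by
    refine sum_neg (fun j _ => mul_neg_of_neg_of_pos ?_ (prod_pos fun i _ => ?_)) univ_nonempty
    · nlinarith [norm_nonneg (α j), hα j]
    · exact pow_pos (norm_pos_iff.mpr (sub_ne_zero.mpr fun h => (hα i).ne (by rw [← h, hz]))) 2
  rw [eval_wronskian_blaschkeDen_blaschkeNum hz]
  exact mul_ne_zero (pow_ne_zero _ (neg_ne_zero.mpr hz0)) (Complex.ofReal_ne_zero.mpr hneg.ne)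

lemma blaschkeLevel_ne_zero [Nonempty ι] {lam ζ : ℂ} (hlam : ‖lam‖ = 1) (hζ : ‖ζ‖ = 1)
    (hα : ∀ j, ‖α j‖ < 1) : blaschkeLevel α lam ζ ≠ 0 :=
  ne_zero_of_natDegree_gt (n := 0) <| by
    rw [natDegree_blaschkeLevel hlam hζ hα]
    exact Fintype.card_pos

lemma nodup_roots_blaschkeLevel [Nonempty ι] {lam ζ : ℂ} (hlam : ‖lam‖ = 1) (hζ : ‖ζ‖ = 1)
    (hα : ∀ j, ‖α j‖ < 1) : (blaschkeLevel α lam ζ).roots.Nodup := by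
  have hlam0 : lam ≠ 0 := norm_ne_zero_iff.mp (by simp [hlam])
  refine nodup_roots_of_not_isRoot_derivative (blaschkeLevel_ne_zero hlam hζ hα)
    fun z hz hz' => ?_
  have hW := eval_wronskian_eq_zero_of_isRoot hz hz' (blaschkeDen α)
  rw [blaschkeLevel, wronskian_C_mul_sub_C_mul, eval_mul, eval_C] at hW
  exact eval_wronskian_blaschkeDen_blaschkeNum_ne_zero hα
    (norm_eq_one_of_isRoot_blaschkeLevel hlam hζ hα hz) ((mul_eq_zero.mp hW).resolve_left hlam0)

lemma isRoot_blaschkeLevel_iff_norm_eq_one_and [Nonempty ι] {lam ζ z : ℂ} (hlam : ‖lam‖ = 1)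
    (hζ : ‖ζ‖ = 1) (hα : ∀ j, ‖α j‖ < 1) :
    (blaschkeLevel α lam ζ).IsRoot z ↔
      ‖z‖ = 1 ∧ lam * ∏ j, (z - α j) / (conj (α j) * z - 1) = ζ := by
  have hcircle {z : ℂ} (hz : ‖z‖ = 1) : (blaschkeLevel α lam ζ).IsRoot z ↔
      lam * ∏ j, (z - α j) / (conj (α j) * z - 1) = ζ := by
    rw [isRoot_blaschkeLevel_iff, prod_div_distrib, ← mul_div_assoc,
      div_eq_iff (prod_ne_zero_iff.mpr fun j _ => Complex.conj_mul_sub_one_ne_zero (hα j) hz)]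
  refine ⟨fun hz => ?_, fun ⟨hz, h⟩ => (hcircle hz).mpr h⟩
  have hz1 := norm_eq_one_of_isRoot_blaschkeLevel hlam hζ hα hz
  exact ⟨hz1, (hcircle hz1).mp hz⟩

end Blaschke

/-- A finite Blaschke product of degree `k+1` restricted to the unit circle has exactly
`k+1` preimages on the circle of any point of the circle. -/
theorem blaschke_circle_preimages (k : ℕ) (lam : ℂ) (hlam : ‖lam‖ = 1)
    (α : Fin (k + 1) → ℂ) (hα : ∀ j, ‖α j‖ < 1)
    (h : ℂ → ℂ)
    (hh : ∀ z : ℂ, h z = lam * ∏ j, (z - α j) / ((starRingEnd ℂ) (α j) * z - 1))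
    (ζ : ℂ) (hζ : ‖ζ‖ = 1) :
    ({z : ℂ | ‖z‖ = 1 ∧ h z = ζ}).Finite ∧
      ({z : ℂ | ‖z‖ = 1 ∧ h z = ζ}).ncard = k + 1 := by
  have hset : {z : ℂ | ‖z‖ = 1 ∧ h z = ζ} = ((blaschkeLevel α lam ζ).roots.toFinset : Set ℂ) := by
    ext z
    rw [Finset.mem_coe, Multiset.mem_toFinset, mem_roots (blaschkeLevel_ne_zero hlam hζ hα),
      isRoot_blaschkeLevel_iff_norm_eq_one_and hlam hζ hα, ← hh]
    rfl
  refine ⟨hset ▸ finite_toSet _, ?_⟩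
  rw [hset, Set.ncard_coe_finset,
    Multiset.toFinset_card_of_nodup (nodup_roots_blaschkeLevel hlam hζ hα),
    IsAlgClosed.card_roots_eq_natDegree, natDegree_blaschkeLevel hlam hζ hα, Fintype.card_fin]
end

section
/- Two Lefschetz thimbles in M_N over vanishing paths γ₁, γ₂ ending at the same critical value j intersect transversally at the critical point q = (0,0,j) (i.e. their tangent planes at q intersect trivially in the 4-real-dimensional tangent space T_q M_N) if and only if γ₁'(1) and γ₂'(1) are not positive real multiples of each other. -/
/-!
The real plane spanned by `(ξ, ξ, 0)` and `(iξ, -iξ, 0)` is `{(wξ, w̄ξ, 0) : w ∈ ℂ}`. A nonzero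
common vector `(w₁ξ₁, w̄₁ξ₁, 0) = (w₂ξ₂, w̄₂ξ₂, 0)` of two such planes gives, on multiplying the
two coordinates, `|w₁|² ξ₁² = |w₂|² ξ₂²`, so `ξ₂²` is a positive multiple of `ξ₁²`; conversely, if
`ξ₂² = t ξ₁²` with `t > 0` then `ξ₂ = ±√t ξ₁`, and `(ξ₂, ξ₂, 0)` lies in both planes.
Since `ξᵢ² = dᵢ c²` with `c ≠ 0`, the condition is `d₂ = t d₁`, whichever branch of the
square root is used.
-/

open Finset

/-- Square root with branch cut along the positive real axis and `√(-1) = i`. -/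
noncomputable def sqrtB (z : ℂ) : ℂ :=
  if z = 0 then 0 else Complex.exp (Complex.log (-z) / 2) * Complex.I

open Complex ComplexConjugate

lemma sqrtB_sq (z : ℂ) : sqrtB z ^ 2 = z := by
  by_cases hz : z = 0
  · simp [sqrtB, hz]
  · calc sqrtB z ^ 2 = exp (log (-z) / 2 + log (-z) / 2) * I ^ 2 := by
          rw [sqrtB, if_neg hz, exp_add]; ring
      _ = z := by rw [add_halves, exp_log (neg_ne_zero.mpr hz), I_sq]; ring

lemma sqrtB_ne_zero {z : ℂ} (hz : z ≠ 0) : sqrtB z ≠ 0 := fun h =>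
  hz (by rw [← sqrtB_sq z, h, zero_pow two_ne_zero])

noncomputable def thimbleTangentPlane (ξ : ℂ) : Submodule ℝ (ℂ × ℂ × ℂ) :=
  Submodule.span ℝ {(ξ, ξ, 0), (I * ξ, -I * ξ, 0)}

lemma mem_thimbleTangentPlane {ξ : ℂ} {x : ℂ × ℂ × ℂ} :
    x ∈ thimbleTangentPlane ξ ↔ ∃ w : ℂ, (w * ξ, conj w * ξ, 0) = x := by
  rw [thimbleTangentPlane, Submodule.mem_span_pair]
  constructor
  · rintro ⟨a, b, rfl⟩
    refine ⟨a + b * I, ?_⟩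
    simp only [Prod.smul_mk, Prod.mk_add_mk, real_smul, map_add, map_mul, conj_ofReal, conj_I,
      smul_zero, add_zero]
    congr 1
    · ring
    · congr 1; ring
  · rintro ⟨w, rfl⟩
    refine ⟨w.re, w.im, ?_⟩
    simp only [Prod.smul_mk, Prod.mk_add_mk, real_smul, smul_zero, add_zero]
    congr 1
    · linear_combination ξ * re_add_im w
    · have hconj : conj w = w.re - w.im * I := Complex.ext (by simp) (by simp)
      congr 1
      linear_combination ξ * hconj.symm

lemma exists_real_eq_mul_of_sq_eq {ξ ζ : ℂ} {t : ℝ} (ht : 0 ≤ t) (h : ζ ^ 2 = t * ξ ^ 2) :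
    ∃ r : ℝ, ζ = r * ξ := by
  have hsqrt : ((√t : ℝ) : ℂ) ^ 2 = t := by rw [← ofReal_pow, Real.sq_sqrt ht]
  have hfactor : (ζ - √t * ξ) * (ζ + √t * ξ) = 0 := by linear_combination h - ξ ^ 2 * hsqrt
  rcases mul_eq_zero.mp hfactor with h | h
  · exact ⟨√t, by linear_combination h⟩
  · exact ⟨-√t, by push_cast; linear_combination h⟩

lemma exists_pos_sq_eq_mul_sq_of_mem_inf {ξ ζ : ℂ} {x : ℂ × ℂ × ℂ}
    (hx : x ∈ thimbleTangentPlane ξ ⊓ thimbleTangentPlane ζ) (hx0 : x ≠ 0) :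
    ∃ t : ℝ, 0 < t ∧ ζ ^ 2 = t * ξ ^ 2 := by
  obtain ⟨hx₁, hx₂⟩ := hx
  obtain ⟨w₁, rfl⟩ := mem_thimbleTangentPlane.mp hx₁
  obtain ⟨w₂, hw⟩ := mem_thimbleTangentPlane.mp hx₂
  simp only [Prod.mk.injEq] at hw
  obtain ⟨h₁, h₂, -⟩ := hw
  have hw₁ : w₁ ≠ 0 := by rintro rfl; simp at hx0
  have hw₂ : w₂ ≠ 0 := by rintro rfl; apply hx0; simp [← h₁, ← h₂]
  have hnormSq : (normSq w₂ : ℂ) * ζ ^ 2 = normSq w₁ * ξ ^ 2 := by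
    rw [← mul_conj, ← mul_conj]; linear_combination (w₁ * ξ) * h₂ + (conj w₂ * ζ) * h₁
  refine ⟨normSq w₁ / normSq w₂, div_pos (normSq_pos.mpr hw₁) (normSq_pos.mpr hw₂), ?_⟩
  have hnormSq₂ : (normSq w₂ : ℂ) ≠ 0 := ofReal_ne_zero.mpr (normSq_pos.mpr hw₂).ne'
  rw [ofReal_div, div_mul_eq_mul_div, eq_div_iff hnormSq₂]
  linear_combination hnormSq

lemma thimbleTangentPlane_inf_eq_bot_iff {ξ ζ : ℂ} (hζ : ζ ≠ 0) :
    thimbleTangentPlane ξ ⊓ thimbleTangentPlane ζ = ⊥ ↔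
      ¬ ∃ t : ℝ, 0 < t ∧ ζ ^ 2 = t * ξ ^ 2 := by
  constructor
  · rintro hbot ⟨t, ht, h⟩
    obtain ⟨r, hr⟩ := exists_real_eq_mul_of_sq_eq ht.le h
    have hmem : ((ζ, ζ, 0) : ℂ × ℂ × ℂ) ∈ thimbleTangentPlane ξ ⊓ thimbleTangentPlane ζ :=
      ⟨mem_thimbleTangentPlane.mpr ⟨r, by simp [hr]⟩, mem_thimbleTangentPlane.mpr ⟨1, by simp⟩⟩
    rw [hbot, Submodule.mem_bot] at hmem
    exact hζ congr($hmem.1)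
  · intro hne
    rw [Submodule.eq_bot_iff]
    by_contra! ⟨x, hx, hx0⟩
    exact hne (exists_pos_sq_eq_mul_sq_of_mem_inf hx hx0)

theorem thimbles_transverse_iff_general (N j : ℕ)
    (d₁ d₂ : ℂ) (hd₂ : d₂ ≠ 0) :
    let c : ℂ := ∏ k ∈ (Finset.Icc 1 N).erase j, sqrtB ((j : ℂ) - (k : ℂ))
    let ξ₁ : ℂ := sqrtB d₁ * c
    let ξ₂ : ℂ := sqrtB d₂ * c
    (Submodule.span ℝ ({(ξ₁, ξ₁, 0), (Complex.I * ξ₁, -(Complex.I) * ξ₁, 0)} :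
          Set (ℂ × ℂ × ℂ)) ⊓
      Submodule.span ℝ ({(ξ₂, ξ₂, 0), (Complex.I * ξ₂, -(Complex.I) * ξ₂, 0)} :
          Set (ℂ × ℂ × ℂ)) = ⊥) ↔
      ¬ ∃ t : ℝ, 0 < t ∧ d₂ = (t : ℂ) * d₁ := by
  intro c ξ₁ ξ₂
  have hc : c ≠ 0 := prod_ne_zero_iff.mpr fun k hk =>
    sqrtB_ne_zero (sub_ne_zero.mpr (by exact_mod_cast (ne_of_mem_erase hk).symm))
  change thimbleTangentPlane ξ₁ ⊓ thimbleTangentPlane ξ₂ = ⊥ ↔ _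
  rw [thimbleTangentPlane_inf_eq_bot_iff (mul_ne_zero (sqrtB_ne_zero hd₂) hc)]
  refine not_congr (exists_congr fun t => and_congr_right fun _ => ?_)
  simp only [ξ₁, mul_pow, sqrtB_sq, ← mul_assoc]
  exact mul_left_inj' (pow_ne_zero 2 hc)

/-- Two Lefschetz thimbles over vanishing paths `γ₁, γ₂` ending at the same critical
value `j`, with end-derivatives `d₁ = γ₁'(1)`, `d₂ = γ₂'(1)`, have tangent planes
`P_i = Span_ℝ{(ξᵢ,ξᵢ,0),(iξᵢ,-iξᵢ,0)}` (with `ξᵢ = √dᵢ·∏_{k≠j}√(j-k)`) at the critical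
point intersecting trivially iff `d₁` and `d₂` are not positive real multiples of each
other. -/
theorem thimbles_transverse_iff (N j : ℕ) (hj : j ∈ Finset.Icc 1 N)
    (d₁ d₂ : ℂ) (hd₁ : d₁ ≠ 0) (hd₂ : d₂ ≠ 0) :
    let c : ℂ := ∏ k ∈ (Finset.Icc 1 N).erase j, sqrtB ((j : ℂ) - (k : ℂ))
    let ξ₁ : ℂ := sqrtB d₁ * c
    let ξ₂ : ℂ := sqrtB d₂ * c
    (Submodule.span ℝ ({(ξ₁, ξ₁, 0), (Complex.I * ξ₁, -(Complex.I) * ξ₁, 0)} :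
          Set (ℂ × ℂ × ℂ)) ⊓
      Submodule.span ℝ ({(ξ₂, ξ₂, 0), (Complex.I * ξ₂, -(Complex.I) * ξ₂, 0)} :
          Set (ℂ × ℂ × ℂ)) = ⊥) ↔
      ¬ ∃ t : ℝ, 0 < t ∧ d₂ = (t : ℂ) * d₁ :=
  thimbles_transverse_iff_general N j d₁ d₂ hd₂
end

section
/- Let h(z) = z (the identity Blaschke product of degree 1 on 𝔻) and r = 1, N ≥ 1. Then the family of maps u_θ(z) = (e^{iθ}ξ(z), e^{−iθ}ξ(z), h(z)) with ξ(z) = ∏_{j=1}^N √(z − j), parameterized by θ ∈ ℝ/2πℤ, gives for each θ a holomorphic map 𝔻 → M_N continuous up to ∂𝔻 whose boundary values on ∂𝔻 ∖ {1} lie on the immersed Lagrangian L_{N,1} = {|u| = |v|, |w| = 1} ∩ M_N, and these are, up to disc automorphisms fixing the boundary marked point 1 and the constant θ, all such maps with exactly one boundary branch jump. -/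
/-!
Uniqueness: with `P z = ∏ j ∈ Icc 1 N, (z - j)`, the function `q = f ^ 2 / P` is holomorphic on
the disc, unimodular on the circle away from `1`, and grows at most like `1 / ‖1 - z‖` at `1`,
since `P` has a simple zero there. Pulled back along
`ζ ↦ tanh (ζ / 2)` from the strip `|im ζ| < π / 2`, this growth is only exponential in `|re ζ|`,
so the Phragmén–Lindelöf principle gives `‖q‖ ≤ 1`. The same holds for `g ^ 2 / P = 1 / q`,
so `q` is a unimodular constant `c`; then `f / ξ` is a continuous square root of `c` on the
connected disc, hence a constant `μ = exp (i θ)`, and `g = μ⁻¹ ξ` follows from `f g = ξ ^ 2`.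
-/

open Metric Finset

open Complex Filter Topology Asymptotics
open scoped Real

section Cayley

variable {w : ℂ}

lemma add_one_ne_zero_of_re_nonneg (hw : 0 ≤ w.re) : w + 1 ≠ 0 := by
  intro h
  have := congrArg re h
  simp at this
  linarith

lemma normSq_sub_one (w : ℂ) : normSq (w - 1) = normSq (w + 1) - 4 * w.re := by
  simp only [normSq_apply, sub_re, add_re, sub_im, add_im, one_re, one_im]
  ring

lemma norm_sub_one_div_add_one_lt_one (hw : 0 < w.re) : ‖(w - 1) / (w + 1)‖ < 1 := by
  have h0 := add_one_ne_zero_of_re_nonneg hw.le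
  rw [norm_div, div_lt_one (norm_pos_iff.2 h0), ← sq_lt_sq₀ (norm_nonneg _) (norm_nonneg _),
    ← normSq_eq_norm_sq, ← normSq_eq_norm_sq, normSq_sub_one]
  linarith

lemma norm_sub_one_div_add_one_eq_one (hw : w.re = 0) : ‖(w - 1) / (w + 1)‖ = 1 := by
  have h0 := add_one_ne_zero_of_re_nonneg hw.ge
  rw [norm_div, div_eq_one_iff_eq (norm_ne_zero_iff.2 h0),
    ← sq_eq_sq₀ (norm_nonneg _) (norm_nonneg _),
    ← normSq_eq_norm_sq, ← normSq_eq_norm_sq, normSq_sub_one, hw]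
  ring

end Cayley

/-- `tanh (ζ / 2)`, the conformal map of the strip `|im ζ| < π / 2` onto the unit disc that
sends `re ζ → +∞` to the boundary point `1`. -/
noncomputable def stripToDisc (ζ : ℂ) : ℂ := (exp ζ - 1) / (exp ζ + 1)

section Strip

variable {ζ : ℂ}

lemma re_exp_nonneg_of_abs_im_le (hζ : |ζ.im| ≤ π / 2) : 0 ≤ (exp ζ).re := by
  rw [exp_re]
  exact mul_nonneg (Real.exp_pos _).le (Real.cos_nonneg_of_mem_Icc (abs_le.1 hζ))

lemma re_exp_pos_of_abs_im_lt (hζ : |ζ.im| < π / 2) : 0 < (exp ζ).re := by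
  rw [exp_re]
  exact mul_pos (Real.exp_pos _) (Real.cos_pos_of_mem_Ioo (abs_lt.1 hζ))

lemma stripToDisc_mem_ball (hζ : |ζ.im| < π / 2) : stripToDisc ζ ∈ ball 0 1 :=
  mem_ball_zero_iff.2 (norm_sub_one_div_add_one_lt_one (re_exp_pos_of_abs_im_lt hζ))

lemma stripToDisc_mem_closedBall (hζ : |ζ.im| ≤ π / 2) :
    stripToDisc ζ ∈ closedBall 0 1 := by
  rcases (re_exp_nonneg_of_abs_im_le hζ).eq_or_lt with h | h
  · exact mem_closedBall_zero_iff.2 (norm_sub_one_div_add_one_eq_one h.symm).le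
  · exact mem_closedBall_zero_iff.2 (norm_sub_one_div_add_one_lt_one h).le

lemma stripToDisc_mem_sphere (hζ : ζ.im = -(π / 2) ∨ ζ.im = π / 2) :
    stripToDisc ζ ∈ sphere 0 1 := by
  refine mem_sphere_zero_iff_norm.2 (norm_sub_one_div_add_one_eq_one ?_)
  rcases hζ with h | h <;> simp [exp_re, h]

lemma one_sub_stripToDisc (hζ : |ζ.im| ≤ π / 2) :
    1 - stripToDisc ζ = 2 / (exp ζ + 1) := by
  have := add_one_ne_zero_of_re_nonneg (re_exp_nonneg_of_abs_im_le hζ)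
  unfold stripToDisc
  field_simp
  ring

lemma stripToDisc_ne_one (hζ : |ζ.im| ≤ π / 2) : stripToDisc ζ ≠ 1 := by
  intro h
  have := one_sub_stripToDisc hζ
  rw [h, sub_self, eq_comm, div_eq_zero_iff] at this
  norm_num at this
  exact add_one_ne_zero_of_re_nonneg (re_exp_nonneg_of_abs_im_le hζ) this

lemma differentiableAt_stripToDisc (hζ : |ζ.im| ≤ π / 2) :
    DifferentiableAt ℂ stripToDisc ζ := by
  have := add_one_ne_zero_of_re_nonneg (re_exp_nonneg_of_abs_im_le hζ)
  unfold stripToDisc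
  fun_prop (disch := assumption)

lemma norm_inv_one_sub_stripToDisc_le (hζ : |ζ.im| ≤ π / 2) :
    ‖1 - stripToDisc ζ‖⁻¹ ≤ Real.exp |ζ.re| := by
  rw [one_sub_stripToDisc hζ, norm_div, inv_div, Complex.norm_two]
  calc ‖exp ζ + 1‖ / 2 ≤ (Real.exp |ζ.re| + Real.exp |ζ.re|) / 2 := by
        gcongr
        refine (norm_add_le _ _).trans (add_le_add ?_ ?_)
        · rw [norm_exp]; exact Real.exp_le_exp.2 (le_abs_self _)
        · simp [Real.one_le_exp (abs_nonneg ζ.re)]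
    _ = Real.exp |ζ.re| := by ring

lemma exists_stripToDisc_eq {z : ℂ} (hz : z ∈ ball (0 : ℂ) 1) :
    ∃ ζ, |ζ.im| < π / 2 ∧ stripToDisc ζ = z := by
  have hz1 : 1 - z ≠ 0 := by
    intro h
    rw [mem_ball_zero_iff, ← sub_eq_zero.1 h] at hz
    simp at hz
  set w := (1 + z) / (1 - z)
  have hw : 0 < w.re := by
    have hz' : z.re * z.re + z.im * z.im < 1 := by
      rw [← normSq_apply, normSq_eq_norm_sq]
      nlinarith [mem_ball_zero_iff.1 hz, norm_nonneg z]
    rw [div_re, ← add_div]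
    apply div_pos _ (normSq_pos.2 hz1)
    simp only [add_re, sub_re, add_im, sub_im, one_re, one_im]
    nlinarith
  have hw0 : w ≠ 0 := fun h => by simp [h] at hw
  refine ⟨log w, ?_, ?_⟩
  · rw [log_im]
    exact abs_arg_lt_pi_div_two_iff.2 (Or.inl hw)
  · rw [stripToDisc, exp_log hw0]
    have : 1 + z + (1 - z) ≠ 0 := by norm_num
    simp only [w]
    field_simp
    ring

end Strip

theorem PhragmenLindelof.ball_of_le_div_norm_one_sub {E : Type*} [NormedAddCommGroup E]
    [NormedSpace ℂ E] {q : ℂ → E} {A C : ℝ} (hd : DifferentiableOn ℂ q (ball 0 1))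
    (hc : ContinuousOn q (closedBall 0 1 \ {1}))
    (hgrowth : ∀ z ∈ ball (0 : ℂ) 1, ‖q z‖ ≤ A / ‖1 - z‖)
    (hbd : ∀ z ∈ sphere (0 : ℂ) 1, z ≠ 1 → ‖q z‖ ≤ C) {z : ℂ} (hz : z ∈ ball (0 : ℂ) 1) :
    ‖q z‖ ≤ C := by
  have hA : 0 ≤ A := by simpa using (norm_nonneg _).trans (hgrowth 0 (mem_ball_self one_pos))
  have hclosure : closure (im ⁻¹' Set.Ioo (-(π / 2)) (π / 2)) = {ζ : ℂ | |ζ.im| ≤ π / 2} := by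
    rw [closure_preimage_im, closure_Ioo (by linarith [Real.pi_pos])]
    ext; simp [abs_le]
  have hdc : DiffContOnCl ℂ (q ∘ stripToDisc) (im ⁻¹' Set.Ioo (-(π / 2)) (π / 2)) := by
    refine ⟨fun ζ hζ => ?_, fun ζ hζ => ?_⟩
    · have hζ' : |ζ.im| < π / 2 := abs_lt.2 hζ
      exact (hd _ (stripToDisc_mem_ball hζ')).comp ζ
        (differentiableAt_stripToDisc hζ'.le).differentiableWithinAt
        fun ω hω => stripToDisc_mem_ball (abs_lt.2 hω)
    · rw [hclosure] at hζ ⊢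
      exact (hc _ ⟨stripToDisc_mem_closedBall hζ, stripToDisc_ne_one hζ⟩).comp
        (differentiableAt_stripToDisc hζ).continuousAt.continuousWithinAt
        fun ω hω => ⟨stripToDisc_mem_closedBall hω, stripToDisc_ne_one hω⟩
  have hgrowth' : (q ∘ stripToDisc) =O[comap (_root_.abs ∘ re) atTop ⊓
      𝓟 (im ⁻¹' Set.Ioo (-(π / 2)) (π / 2))] fun ζ => Real.exp (2 * Real.exp (1 / 2 * |ζ.re|)) := by
    refine IsBigO.of_bound A (eventually_inf_principal.2 (Eventually.of_forall fun ζ hζ => ?_))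
    have hζ' : |ζ.im| < π / 2 := abs_lt.2 hζ
    have hlin : |ζ.re| ≤ 2 * Real.exp (1 / 2 * |ζ.re|) := by
      linarith [Real.add_one_le_exp (1 / 2 * |ζ.re|)]
    rw [Real.norm_of_nonneg (Real.exp_pos _).le]
    calc ‖q (stripToDisc ζ)‖ ≤ A * ‖1 - stripToDisc ζ‖⁻¹ :=
          div_eq_mul_inv A _ ▸ hgrowth _ (stripToDisc_mem_ball hζ')
      _ ≤ A * Real.exp (2 * Real.exp (1 / 2 * |ζ.re|)) := by
          gcongr
          exact (norm_inv_one_sub_stripToDisc_le hζ'.le).trans (Real.exp_le_exp.2 hlin)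
  have hedge : ∀ ζ : ℂ, (ζ.im = -(π / 2) ∨ ζ.im = π / 2) → ‖(q ∘ stripToDisc) ζ‖ ≤ C :=
    fun ζ hζ => hbd _ (stripToDisc_mem_sphere hζ) (stripToDisc_ne_one (by
      rcases hζ with h | h <;> simp [h, abs_of_pos (half_pos Real.pi_pos)]))
  obtain ⟨ζ, hζ, rfl⟩ := exists_stripToDisc_eq hz
  show ‖(q ∘ stripToDisc) ζ‖ ≤ C
  refine PhragmenLindelof.horizontal_strip hdc ⟨1 / 2, ?_, 2, hgrowth'⟩
    (fun ω h => hedge ω (Or.inl h)) (fun ω h => hedge ω (Or.inr h)) (abs_lt.1 hζ).1.le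
    (abs_lt.1 hζ).2.le
  rw [show π / 2 - -(π / 2) = π by ring, div_self Real.pi_ne_zero]
  norm_num

lemma sqrtB_mul_self (w : ℂ) : sqrtB w * sqrtB w = w := by
  rcases eq_or_ne w 0 with rfl | hw
  · simp [sqrtB]
  · rw [sqrtB, if_neg hw, mul_mul_mul_comm, ← exp_add, add_halves, exp_log (neg_ne_zero.2 hw),
      I_mul_I]
    ring

lemma norm_sqrtB (w : ℂ) : ‖sqrtB w‖ = √‖w‖ := by
  conv_rhs => rw [← sqrtB_mul_self w, norm_mul, Real.sqrt_mul_self (norm_nonneg _)]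

lemma continuousAt_sqrtB_zero : ContinuousAt sqrtB 0 := by
  have h0 : sqrtB 0 = 0 := by simp [sqrtB]
  rw [ContinuousAt, h0, tendsto_zero_iff_norm_tendsto_zero]
  simp_rw [norm_sqrtB]
  have : Continuous fun u : ℂ => √‖u‖ := by fun_prop
  simpa using this.tendsto 0

lemma differentiableAt_sqrtB {w : ℂ} (hw : w.re < 0) : DifferentiableAt ℂ sqrtB w := by
  have hw0 : w ≠ 0 := fun h => by simp [h] at hw
  have hslit : -w ∈ slitPlane := Or.inl (by simpa using hw)
  have heq : (fun u => exp (log (-u) / 2) * I) =ᶠ[𝓝 w] sqrtB := by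
    filter_upwards [isOpen_ne.mem_nhds hw0] with u hu
    simp [sqrtB, hu]
  refine DifferentiableAt.congr_of_eventuallyEq ?_ heq.symm
  fun_prop (disch := assumption)

lemma re_lt_one_of_mem_closedBall {z : ℂ} (hz : z ∈ closedBall (0 : ℂ) 1) (hz1 : z ≠ 1) :
    z.re < 1 := by
  have hn := mem_closedBall_zero_iff.1 hz
  refine (z.re_le_norm.trans hn).lt_of_ne fun h => hz1 ?_
  have hzn : z.re = ‖z‖ := le_antisymm z.re_le_norm (hn.trans h.ge)
  rw [← re_add_im z, (abs_re_eq_norm.1 (by rw [hzn, abs_norm])), h]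
  simp

lemma re_sub_natCast_neg {z : ℂ} (hz : z ∈ closedBall (0 : ℂ) 1) (hz1 : z ≠ 1) {j : ℕ}
    (hj : 1 ≤ j) : (z - j).re < 0 := by
  have : (1 : ℝ) ≤ j := by exact_mod_cast hj
  simp only [sub_re, natCast_re]
  linarith [re_lt_one_of_mem_closedBall hz hz1]

lemma ne_one_of_mem_ball {z : ℂ} (hz : z ∈ ball (0 : ℂ) 1) : z ≠ 1 := by
  rintro rfl
  simp at hz

lemma continuousAt_sqrtB_sub_natCast {z : ℂ} (hz : z ∈ closedBall (0 : ℂ) 1) {j : ℕ}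
    (hj : 1 ≤ j) : ContinuousAt (fun u => sqrtB (u - j)) z := by
  refine ContinuousAt.comp (g := sqrtB) ?_ (by fun_prop)
  by_cases hz1 : z = 1
  · rcases hj.eq_or_lt with rfl | hj2
    · simpa [hz1] using continuousAt_sqrtB_zero
    · refine (differentiableAt_sqrtB ?_).continuousAt
      have : (2 : ℝ) ≤ j := by exact_mod_cast hj2
      simp only [hz1, sub_re, one_re, natCast_re]
      linarith
  · exact (differentiableAt_sqrtB (re_sub_natCast_neg hz hz1 hj)).continuousAt

noncomputable def xi (N : ℕ) (z : ℂ) : ℂ := ∏ j ∈ Icc 1 N, sqrtB (z - j)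

def rootProd (N : ℕ) (z : ℂ) : ℂ := ∏ j ∈ Icc 1 N, (z - j)

section RootProd

variable (N : ℕ)

lemma xi_mul_self (z : ℂ) : xi N z * xi N z = rootProd N z := by
  simp only [xi, rootProd, ← prod_mul_distrib, sqrtB_mul_self]

lemma differentiableOn_xi : DifferentiableOn ℂ (xi N) (ball 0 1) := fun z hz =>
  (DifferentiableAt.fun_finsetProd fun _ hj => (differentiableAt_sqrtB
    (re_sub_natCast_neg (ball_subset_closedBall hz) (ne_one_of_mem_ball hz)
      (mem_Icc.1 hj).1)).comp z ((differentiableAt_id).sub_const _)).differentiableWithinAt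

lemma continuousOn_xi : ContinuousOn (xi N) (closedBall 0 1) :=
  continuousOn_finsetProd _ fun _ hj _ hz =>
    (continuousAt_sqrtB_sub_natCast hz (mem_Icc.1 hj).1).continuousWithinAt

lemma differentiable_rootProd : Differentiable ℂ (rootProd N) := by
  unfold rootProd
  fun_prop

lemma rootProd_ne_zero {z : ℂ} (hz : z ∈ closedBall (0 : ℂ) 1) (hz1 : z ≠ 1) :
    rootProd N z ≠ 0 :=
  prod_ne_zero_iff.2 fun j hj h => by
    simpa [h] using re_sub_natCast_neg hz hz1 (mem_Icc.1 hj).1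

end RootProd

lemma norm_one_sub_le_norm_rootProd {N : ℕ} (hN : 1 ≤ N) {z : ℂ}
    (hz : z ∈ closedBall (0 : ℂ) 1) : ‖1 - z‖ ≤ ‖rootProd N z‖ := by
  have hfar : 1 ≤ ∏ j ∈ (Icc 1 N).erase 1, ‖z - j‖ := by
    refine one_le_prod fun j hj => ?_
    have hj2 : (2 : ℝ) ≤ j := by
      obtain ⟨hj1, hj⟩ := mem_erase.1 hj
      exact_mod_cast (show 2 ≤ j by have := (mem_Icc.1 hj).1; omega)
    have := norm_sub_norm_le (j : ℂ) z
    rw [norm_sub_rev, Complex.norm_natCast] at this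
    linarith [mem_closedBall_zero_iff.1 hz]
  rw [rootProd, ← mul_prod_erase _ _ (mem_Icc.2 ⟨le_rfl, hN⟩), norm_mul, norm_prod,
    Nat.cast_one, norm_sub_rev]
  exact le_mul_of_one_le_right (norm_nonneg _) hfar

section Uniqueness

variable {P f g : ℂ → ℂ}

lemma norm_sq_div_le_one (hPd : DifferentiableOn ℂ P (ball 0 1))
    (hPc : ContinuousOn P (closedBall 0 1 \ {1}))
    (hP0 : ∀ z ∈ closedBall (0 : ℂ) 1, z ≠ 1 → P z ≠ 0)
    (hP1 : ∀ z ∈ ball (0 : ℂ) 1, ‖1 - z‖ ≤ ‖P z‖)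
    (hfd : DifferentiableOn ℂ f (ball 0 1)) (hfc : ContinuousOn f (closedBall 0 1))
    (hbd : ∀ z ∈ sphere (0 : ℂ) 1, z ≠ 1 → ‖f z‖ ^ 2 ≤ ‖P z‖) {z : ℂ}
    (hz : z ∈ ball (0 : ℂ) 1) : ‖f z ^ 2 / P z‖ ≤ 1 := by
  obtain ⟨M, hM⟩ := (isCompact_closedBall (0 : ℂ) 1).exists_bound_of_continuousOn hfc
  refine PhragmenLindelof.ball_of_le_div_norm_one_sub (q := fun w => f w ^ 2 / P w)
    (A := M ^ 2) ?_ ?_ (fun w hw => ?_) (fun w hw hw1 => ?_) hz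
  · exact (hfd.pow 2).div hPd fun w hw =>
      hP0 w (ball_subset_closedBall hw) (ne_one_of_mem_ball hw)
  · exact ((hfc.mono Set.sdiff_subset).pow 2).div hPc fun w hw => hP0 w hw.1 hw.2
  · have h0 : 0 < ‖1 - w‖ := norm_pos_iff.2 (sub_ne_zero.2 (ne_one_of_mem_ball hw).symm)
    rw [norm_div, norm_pow]
    exact div_le_div₀ (sq_nonneg _)
      (pow_le_pow_left₀ (norm_nonneg _) (hM w (ball_subset_closedBall hw)) 2) h0 (hP1 w hw)
  · rw [norm_div, norm_pow]
    exact div_le_one_of_le₀ (hbd w hw hw1) (norm_nonneg _)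

lemma exists_sq_eq_mul (hPd : DifferentiableOn ℂ P (ball 0 1))
    (hPc : ContinuousOn P (closedBall 0 1 \ {1}))
    (hP0 : ∀ z ∈ closedBall (0 : ℂ) 1, z ≠ 1 → P z ≠ 0)
    (hP1 : ∀ z ∈ ball (0 : ℂ) 1, ‖1 - z‖ ≤ ‖P z‖)
    (hfd : DifferentiableOn ℂ f (ball 0 1)) (hgd : DifferentiableOn ℂ g (ball 0 1))
    (hfc : ContinuousOn f (closedBall 0 1)) (hgc : ContinuousOn g (closedBall 0 1))
    (hfg : ∀ z ∈ closedBall (0 : ℂ) 1, f z * g z = P z)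
    (hnorm : ∀ z ∈ sphere (0 : ℂ) 1, z ≠ 1 → ‖f z‖ = ‖g z‖) :
    ∃ c : ℂ, ‖c‖ = 1 ∧ ∀ z ∈ ball (0 : ℂ) 1, f z ^ 2 = c * P z := by
  have hP0' : ∀ z ∈ ball (0 : ℂ) 1, P z ≠ 0 := fun z hz =>
    hP0 z (ball_subset_closedBall hz) (ne_one_of_mem_ball hz)
  have hsphere : ∀ z ∈ sphere (0 : ℂ) 1, z ≠ 1 → ‖f z‖ ^ 2 = ‖P z‖ ∧ ‖g z‖ ^ 2 = ‖P z‖ := by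
    intro z hz hz1
    have := congrArg norm (hfg z (sphere_subset_closedBall hz))
    rw [norm_mul, hnorm z hz hz1] at this
    rw [sq, sq, hnorm z hz hz1]
    exact ⟨this, this⟩
  set q : ℂ → ℂ := fun z => f z ^ 2 / P z
  have hq : ∀ z ∈ ball (0 : ℂ) 1, ‖q z‖ = 1 := by
    intro z hz
    have hf := norm_sq_div_le_one hPd hPc hP0 hP1 hfd hfc (fun w hw hw1 =>
      (hsphere w hw hw1).1.le) hz
    have hg := norm_sq_div_le_one hPd hPc hP0 hP1 hgd hgc (fun w hw hw1 =>
      (hsphere w hw hw1).2.le) hz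
    have hprod : q z * (g z ^ 2 / P z) = 1 := by
      rw [div_mul_div_comm, ← mul_pow, hfg z (ball_subset_closedBall hz), sq]
      exact div_self (mul_ne_zero (hP0' z hz) (hP0' z hz))
    have := congrArg norm hprod
    rw [norm_mul, norm_one] at this
    nlinarith [norm_nonneg (q z), norm_nonneg (g z ^ 2 / P z)]
  have hqd : DifferentiableOn ℂ q (ball 0 1) := (hfd.pow 2).div hPd hP0'
  have hmax : IsMaxOn (norm ∘ q) (ball 0 1) 0 := fun z hz => by
    simp [hq z hz, hq 0 (mem_ball_self one_pos)]
  have hconst := eqOn_of_isPreconnected_of_isMaxOn_norm (convex_ball (0 : ℂ) 1).isPreconnected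
    isOpen_ball hqd (mem_ball_self one_pos) hmax
  refine ⟨q 0, hq 0 (mem_ball_self one_pos), fun z hz => ?_⟩
  have hqz : f z ^ 2 / P z = q 0 := hconst hz
  rw [← hqz, div_mul_cancel₀ _ (hP0' z hz)]

end Uniqueness

lemma exists_eq_mul_of_sq_eq_mul {U : Set ℂ} (hU : IsPreconnected U) {x : ℂ} (hx : x ∈ U)
    {f g ξ : ℂ → ℂ} (hfc : ContinuousOn f U) (hξc : ContinuousOn ξ U)
    (hξ0 : ∀ z ∈ U, ξ z ≠ 0) {c : ℂ} (hc : ‖c‖ = 1) (hf : ∀ z ∈ U, f z ^ 2 = c * ξ z ^ 2)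
    (hfg : ∀ z ∈ U, f z * g z = ξ z ^ 2) :
    ∃ μ : ℂ, ‖μ‖ = 1 ∧ ∀ z ∈ U, f z = μ * ξ z ∧ g z = μ⁻¹ * ξ z := by
  set μ := f x / ξ x
  have hμc : μ ^ 2 = c := by
    rw [div_pow, hf x hx, mul_div_cancel_right₀ _ (pow_ne_zero 2 (hξ0 x hx))]
  have hμ : ‖μ‖ = 1 := by
    rw [← pow_eq_one_iff_of_nonneg (norm_nonneg _) two_ne_zero, ← norm_pow, hμc, hc]
  have hμ0 : μ ≠ 0 := norm_ne_zero_iff.1 (by rw [hμ]; exact one_ne_zero)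
  have hfμ : Set.EqOn f (fun z => μ * ξ z) U :=
    hU.eq_of_sq_eq hfc (continuousOn_const.mul hξc)
      (fun z hz => by simp only [Pi.pow_apply, mul_pow, hμc, hf z hz])
      (fun hz => mul_ne_zero hμ0 (hξ0 _ hz)) hx (div_mul_cancel₀ _ (hξ0 x hx)).symm
  refine ⟨μ, hμ, fun z hz => ⟨hfμ hz, ?_⟩⟩
  rw [eq_inv_mul_iff_mul_eq₀ hμ0]
  refine mul_left_cancel₀ (hξ0 z hz) ?_
  linear_combination (hfg z hz) - g z * hfμ hz

/-- For `r = 1` and `h(z) = z`, the circle family `u_θ(z) = (e^{iθ}ξ(z), e^{-iθ}ξ(z), z)`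
with `ξ = ∏_{j=1}^N √(z-j)` consists of holomorphic maps `𝔻 → M_N`, continuous up to the
boundary, whose boundary values on `∂𝔻 ∖ {1}` lie on the immersed Lagrangian
`L_{N,1} = {|u| = |v|, |w| = 1} ∩ M_N`; and (up to disc automorphisms fixing the marked
boundary point `1`, i.e. normalizing the third coordinate to be `z`) these are all such
maps with exactly one boundary branch jump. -/
theorem disc_family_r_one (N : ℕ) (hN : 1 ≤ N) :
    let ξ : ℂ → ℂ := fun z => ∏ j ∈ Finset.Icc 1 N, sqrtB (z - (j : ℂ))
    (∀ θ : ℝ,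
      DifferentiableOn ℂ (fun z => Complex.exp (Complex.I * θ) * ξ z) (ball (0 : ℂ) 1) ∧
      DifferentiableOn ℂ (fun z => Complex.exp (-(Complex.I) * θ) * ξ z) (ball (0 : ℂ) 1) ∧
      ContinuousOn (fun z => Complex.exp (Complex.I * θ) * ξ z) (closedBall (0 : ℂ) 1) ∧
      ContinuousOn (fun z => Complex.exp (-(Complex.I) * θ) * ξ z) (closedBall (0 : ℂ) 1) ∧
      (∀ z ∈ closedBall (0 : ℂ) 1,
        (Complex.exp (Complex.I * θ) * ξ z) * (Complex.exp (-(Complex.I) * θ) * ξ z) =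
          ∏ j ∈ Finset.Icc 1 N, (z - (j : ℂ))) ∧
      (∀ z ∈ sphere (0 : ℂ) 1, z ≠ 1 →
        ‖Complex.exp (Complex.I * θ) * ξ z‖ = ‖Complex.exp (-(Complex.I) * θ) * ξ z‖ ∧
          ‖z‖ = 1)) ∧
    (∀ f g : ℂ → ℂ,
      DifferentiableOn ℂ f (ball (0 : ℂ) 1) →
      DifferentiableOn ℂ g (ball (0 : ℂ) 1) →
      ContinuousOn f (closedBall (0 : ℂ) 1) →
      ContinuousOn g (closedBall (0 : ℂ) 1) →
      (∀ z ∈ closedBall (0 : ℂ) 1, f z * g z = ∏ j ∈ Finset.Icc 1 N, (z - (j : ℂ))) →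
      (∀ z ∈ sphere (0 : ℂ) 1, z ≠ 1 → ‖f z‖ = ‖g z‖) →
      ∃ θ : ℝ, ∀ z ∈ ball (0 : ℂ) 1,
        f z = Complex.exp (Complex.I * θ) * ξ z ∧
        g z = Complex.exp (-(Complex.I) * θ) * ξ z) := by
  intro ξ
  have hξd : DifferentiableOn ℂ ξ (ball 0 1) := differentiableOn_xi N
  have hξc : ContinuousOn ξ (closedBall 0 1) := continuousOn_xi N
  have hξsq : ∀ z, ξ z ^ 2 = rootProd N z := fun z => (sq _).trans (xi_mul_self N z)
  have hξ0 : ∀ z ∈ ball (0 : ℂ) 1, ξ z ≠ 0 := fun z hz h => rootProd_ne_zero N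
    (ball_subset_closedBall hz) (ne_one_of_mem_ball hz) (by rw [← hξsq, h, zero_pow two_ne_zero])
  have hexp : ∀ θ : ℝ, exp (I * θ) * exp (-I * θ) = 1 := fun θ => by
    rw [← exp_add, ← add_mul, add_neg_cancel, zero_mul, exp_zero]
  refine ⟨fun θ => ⟨(differentiableOn_const _).mul hξd, (differentiableOn_const _).mul hξd,
    continuousOn_const.mul hξc, continuousOn_const.mul hξc, fun z _ => ?_, fun z hz _ => ?_⟩,
    fun f g hfd hgd hfc hgc hfg hnorm => ?_⟩
  · rw [mul_mul_mul_comm, hexp, one_mul, ← sq]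
    exact hξsq z
  · simp [norm_exp, mem_sphere_zero_iff_norm.1 hz]
  · obtain ⟨c, hc, hfc2⟩ := exists_sq_eq_mul (differentiable_rootProd N).differentiableOn
      (differentiable_rootProd N).continuous.continuousOn (fun _ => rootProd_ne_zero N)
      (fun z hz => norm_one_sub_le_norm_rootProd hN (ball_subset_closedBall hz))
      hfd hgd hfc hgc hfg hnorm
    obtain ⟨μ, hμ, hfgμ⟩ := exists_eq_mul_of_sq_eq_mul (convex_ball (0 : ℂ) 1).isPreconnected
      (mem_ball_self one_pos) hfd.continuousOn hξd.continuousOn hξ0 hc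
      (fun z hz => by rw [hξsq]; exact hfc2 z hz)
      (fun z hz => by rw [hξsq]; exact hfg z (ball_subset_closedBall hz))
    have hμexp : exp (I * arg μ) = μ := by
      simpa [hμ, mul_comm] using norm_mul_exp_arg_mul_I μ
    have hμexp' : exp (-I * arg μ) = μ⁻¹ := by rw [neg_mul, exp_neg, hμexp]
    refine ⟨arg μ, fun z hz => ?_⟩
    rw [hμexp, hμexp']
    exact hfgμ z hz
end

section
/- The squared phase of the Lagrangian torus fibers of M_N with respect to the meromorphic volume form Ω/w is real: if Ω is the holomorphic volume form on M_N satisfying Ω(X_{H1}, ·) = i·dw along M_N, and T is the tangent plane to a torus fiber {H1 = b₁, |w|² = b₂} spanned by X_{H1} and X_{H2}, then Im((Ω/w)(X_{H1}, X_{H2})) = 0; equivalently (Ω/w)(X_{H1}, X_{H2}) = i·d(log w)(X_{H2}) has zero imaginary part since d(log|w|)(X_{H2}) = 0. -/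
open Finset

/-- `p(w) = (w-1)(w-2)⋯(w-N)`. -/
noncomputable def pN (N : ℕ) (w : ℂ) : ℂ := ∏ k ∈ Finset.Icc 1 N, (w - (k : ℂ))

open Complex ComplexConjugate

/-- `Ω = (∂P/∂w)⁻¹ du∧dv` evaluated at a point where `∂P/∂w = -c`. -/
noncomputable def residueForm (c : ℂ) (X Y : ℂ × ℂ × ℂ) : ℂ :=
  (-c)⁻¹ * (X.1 * Y.2.1 - X.2.1 * Y.1)

def hamiltonianVectorField (u v : ℂ) : ℂ × ℂ × ℂ := (-I * u, I * v, 0)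

theorem residueForm_hamiltonianVectorField {c u v : ℂ} (hc : c ≠ 0) {V : ℂ × ℂ × ℂ}
    (hV : v * V.1 + u * V.2.1 - c * V.2.2 = 0) :
    residueForm c (hamiltonianVectorField u v) V = I * V.2.2 := by
  have hcomb : -I * u * V.2.1 - I * v * V.1 = -I * (c * V.2.2) := by
    linear_combination -I * hV
  rw [residueForm, hamiltonianVectorField, hcomb]
  field_simp

theorem im_I_mul_div (z w : ℂ) : (I * z / w).im = (conj w * z).re / normSq w := by
  rw [div_im]
  simp only [mul_im, mul_re, I_re, I_im, conj_re, conj_im]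
  ring

theorem torus_fibers_special_lagrangian_general (N : ℕ) (u v w : ℂ)
    (hq : deriv (pN N) w ≠ 0)
    (V : ℂ × ℂ × ℂ)
    (hVtan : v * V.1 + u * V.2.1 - deriv (pN N) w * V.2.2 = 0)
    (hVpres : ((starRingEnd ℂ) w * V.2.2).re = 0) :
    let Omg : (ℂ × ℂ × ℂ) → (ℂ × ℂ × ℂ) → ℂ :=
      fun X Y => (-(deriv (pN N) w))⁻¹ * (X.1 * Y.2.1 - X.2.1 * Y.1)
    let XH1 : ℂ × ℂ × ℂ := (-(Complex.I) * u, Complex.I * v, 0)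
    Omg XH1 V = Complex.I * V.2.2 ∧ (Omg XH1 V / w).im = 0 := by
  intro Omg XH1
  have hΩ : Omg XH1 V = I * V.2.2 := residueForm_hamiltonianVectorField hq hVtan
  refine ⟨hΩ, ?_⟩
  rw [hΩ, im_I_mul_div, hVpres, zero_div]

/-- The torus fibers of `M_N` are special Lagrangian for `Ω/w`: writing
`Ω = (∂P/∂w)⁻¹ du∧dv` at a point where `∂P/∂w = -p'(w) ≠ 0`, one has
`Ω(X_{H1}, V) = i·dw(V)` for tangent `V`, and for `V` preserving `H2 = |w|²`
(`Re(w̄·V₃) = 0`, `w ≠ 0`) the squared phase `(Ω/w)(X_{H1}, V)` has zero imaginary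
part. -/
theorem torus_fibers_special_lagrangian (N : ℕ) (u v w : ℂ)
    (hM : u * v = pN N w) (hw : w ≠ 0) (hq : deriv (pN N) w ≠ 0)
    (V : ℂ × ℂ × ℂ)
    (hVtan : v * V.1 + u * V.2.1 - deriv (pN N) w * V.2.2 = 0)
    (hVpres : ((starRingEnd ℂ) w * V.2.2).re = 0) :
    let Omg : (ℂ × ℂ × ℂ) → (ℂ × ℂ × ℂ) → ℂ :=
      fun X Y => (-(deriv (pN N) w))⁻¹ * (X.1 * Y.2.1 - X.2.1 * Y.1)
    let XH1 : ℂ × ℂ × ℂ := (-(Complex.I) * u, Complex.I * v, 0)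
    Omg XH1 V = Complex.I * V.2.2 ∧ (Omg XH1 V / w).im = 0 :=
  torus_fibers_special_lagrangian_general N u v w hq V hVtan hVpres
end
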